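/- For every c ∈ R, the sublevel set { (β₀, β, α) ∈ R × R^d × R^n : L(β₀, β, α) ≤ c } of the STRLS objective L(β₀, β, α) = (1/2)‖y − β₀·1 − Xβ − α‖₂² + (1/2)T_h(α) + λ‖β‖₁ is bounded. -/

import Mathlib

/-!
All three terms of the objective are nonnegative, so on the sublevel set `L ≤ c` the penalty
bounds `‖β‖₁ ≤ c / λ`, every residual satisfies `|rᵢ| ≤ √(2c)`, and `T_h(α) ≤ 2c`. Since `h ≥ 1`,
the last bound forces some coordinate `α i₀` to be small as well; the residual at `i₀` then pins
down the intercept `β₀`, and the residuals at the other coordinates pin down all of `α`.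
-/

/-- Trimmed squares function. -/
noncomputable def Th (n h : ℕ) (r : Fin n → ℝ) : ℝ :=
  sInf {s : ℝ | ∃ Λ : Finset (Fin n), Λ.card = h ∧ s = ∑ i ∈ Λ, r i ^ 2}

open Finset Metric Matrix

attribute [local instance] Matrix.linftyOpNormedAddCommGroup

lemma pi_norm_le_sum_norm_apply {ι G : Type*} [Fintype ι] [SeminormedAddCommGroup G]
    (f : ι → G) : ‖f‖ ≤ ∑ i, ‖f i‖ :=
  (pi_norm_le_iff_of_nonneg (sum_nonneg fun _ _ => norm_nonneg _)).2 fun i =>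
    single_le_sum (f := fun i => ‖f i‖) (fun _ _ => norm_nonneg _) (mem_univ i)

lemma Matrix.abs_mulVec_apply_le {m k : Type*} [Fintype m] [Fintype k] (X : Matrix m k ℝ)
    (v : k → ℝ) (i : m) : |(X *ᵥ v) i| ≤ ‖X‖ * ‖v‖ :=
  (norm_le_pi_norm (X *ᵥ v) i).trans (Matrix.linfty_opNorm_mulVec X v)

section TrimmedSquares

variable {n h : ℕ}

lemma Th_nonneg (r : Fin n → ℝ) : 0 ≤ Th n h r :=
  Real.sInf_nonneg <| by
    rintro s ⟨Λ, -, rfl⟩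
    exact sum_nonneg fun i _ => sq_nonneg _

lemma exists_finset_card_eq_Th (hhn : h ≤ n) (r : Fin n → ℝ) :
    ∃ Λ : Finset (Fin n), Λ.card = h ∧ Th n h r = ∑ i ∈ Λ, r i ^ 2 := by
  show Th n h r ∈ {s : ℝ | ∃ Λ : Finset (Fin n), Λ.card = h ∧ s = ∑ i ∈ Λ, r i ^ 2}
  refine Set.Nonempty.csInf_mem ?_ ?_
  · obtain ⟨Λ, -, hΛ⟩ := exists_subset_card_eq (s := (univ : Finset (Fin n))) (by simpa using hhn)
    exact ⟨_, Λ, hΛ, rfl⟩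
  · refine (Set.finite_range fun Λ : Finset (Fin n) => ∑ i ∈ Λ, r i ^ 2).subset ?_
    rintro s ⟨Λ, -, rfl⟩
    exact ⟨Λ, rfl⟩

lemma exists_sq_le_Th (hh : 1 ≤ h) (hhn : h ≤ n) (r : Fin n → ℝ) :
    ∃ i, r i ^ 2 ≤ Th n h r := by
  obtain ⟨Λ, hcard, hΛ⟩ := exists_finset_card_eq_Th hhn r
  obtain ⟨i, hi⟩ : Λ.Nonempty := card_pos.mp (by omega)
  exact ⟨i, hΛ ▸ single_le_sum (f := fun i => r i ^ 2) (fun i _ => sq_nonneg _) hi⟩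

end TrimmedSquares

section STRLS

variable {n d : ℕ} (y : Fin n → ℝ) (X : Matrix (Fin n) (Fin d) ℝ)

noncomputable def strlsObjective (h : ℕ) (lam : ℝ) (p : ℝ × (Fin d → ℝ) × (Fin n → ℝ)) : ℝ :=
  (1 / 2) * ∑ i, (y i - p.1 - X.mulVec p.2.1 i - p.2.2 i) ^ 2
    + (1 / 2) * Th n h p.2.2 + lam * ∑ j, |p.2.1 j|

lemma bounds_of_strlsObjective_le {h : ℕ} {lam c : ℝ} (hlam : 0 < lam) {β₀ : ℝ}
    {β : Fin d → ℝ} {α : Fin n → ℝ} (hp : strlsObjective y X h lam (β₀, β, α) ≤ c) :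
    (∀ i, |y i - β₀ - (X *ᵥ β) i - α i| ≤ √(2 * c)) ∧ Th n h α ≤ 2 * c ∧ ‖β‖ ≤ c / lam := by
  have hres := sum_nonneg fun i (_ : i ∈ univ) => sq_nonneg (y i - β₀ - (X *ᵥ β) i - α i)
  have hTh : 0 ≤ Th n h α := Th_nonneg α
  have hpen := mul_nonneg hlam.le (sum_nonneg fun j (_ : j ∈ univ) => abs_nonneg (β j))
  unfold strlsObjective at hp
  refine ⟨fun i => Real.abs_le_sqrt ?_, by linarith, ?_⟩
  · exact (single_le_sum (f := fun i => (y i - β₀ - (X *ᵥ β) i - α i) ^ 2)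
      (fun i _ => sq_nonneg _) (mem_univ i)).trans (by linarith)
  · rw [le_div_iff₀ hlam]
    calc ‖β‖ * lam ≤ (∑ j, |β j|) * lam := by
          gcongr
          simpa only [Real.norm_eq_abs] using pi_norm_le_sum_norm_apply β
      _ ≤ c := by linarith

variable {y X} {β₀ : ℝ} {β : Fin d → ℝ} {α : Fin n → ℝ} {R : ℝ}

lemma abs_intercept_le {i : Fin n} (hres : |y i - β₀ - (X *ᵥ β) i - α i| ≤ R)
    (hα : |α i| ≤ R) : |β₀| ≤ ‖y‖ + ‖X‖ * ‖β‖ + 2 * R := by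
  have hy := abs_le.mp (norm_le_pi_norm y i)
  have hXβ := abs_le.mp (X.abs_mulVec_apply_le β i)
  have := abs_le.mp hres
  have := abs_le.mp hα
  exact abs_le.mpr ⟨by linarith, by linarith⟩

lemma norm_outliers_le (hR : 0 ≤ R) (hres : ∀ i, |y i - β₀ - (X *ᵥ β) i - α i| ≤ R) :
    ‖α‖ ≤ ‖y‖ + |β₀| + ‖X‖ * ‖β‖ + R := by
  refine (pi_norm_le_iff_of_nonneg (by positivity)).2 fun i => ?_
  have hy := abs_le.mp (norm_le_pi_norm y i)
  have hXβ := abs_le.mp (X.abs_mulVec_apply_le β i)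
  have := abs_le.mp (hres i)
  rw [Real.norm_eq_abs]
  exact abs_le.mpr ⟨by linarith [le_abs_self β₀], by linarith [neg_abs_le β₀]⟩

end STRLS

/-- every sublevel set of the STRLS objective is bounded. -/
theorem stmt_10 (n d h : ℕ) (hh : 1 ≤ h) (hhn : h ≤ n)
    (y : Fin n → ℝ) (X : Matrix (Fin n) (Fin d) ℝ) (lam : ℝ) (hlam : 0 < lam)
    (c : ℝ) :
    Bornology.IsBounded {p : ℝ × (Fin d → ℝ) × (Fin n → ℝ) |
      (1 / 2) * ∑ i, (y i - p.1 - X.mulVec p.2.1 i - p.2.2 i) ^ 2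
        + (1 / 2) * Th n h p.2.2 + lam * ∑ j, |p.2.1 j| ≤ c} := by
  set R := √(2 * c)
  set A := ‖y‖ + ‖X‖ * (c / lam) + 2 * R
  refine (isBounded_closedBall.prod (isBounded_closedBall.prod isBounded_closedBall)).subset
    (t := closedBall (0 : ℝ) A ×ˢ closedBall 0 (c / lam) ×ˢ
      closedBall 0 (‖y‖ + A + ‖X‖ * (c / lam) + R)) ?_
  rintro ⟨β₀, β, α⟩ hp
  obtain ⟨hres, hTh, hβ⟩ := bounds_of_strlsObjective_le y X hlam hp
  obtain ⟨i₀, hi₀⟩ := exists_sq_le_Th hh hhn α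
  have hβ₀ : |β₀| ≤ A :=
    (abs_intercept_le (hres i₀) (Real.abs_le_sqrt (hi₀.trans hTh))).trans
      (by gcongr : _ ≤ ‖y‖ + ‖X‖ * (c / lam) + 2 * R)
  simp only [Set.mem_prod, mem_closedBall_zero_iff, Real.norm_eq_abs]
  refine ⟨hβ₀, hβ, (norm_outliers_le (Real.sqrt_nonneg _) hres).trans ?_⟩
  gcongr
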